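/- arXiv:2304.06625 — 2 statements merged into one kernel-verified Lean document; each statement's English description precedes it below -/
import Mathlib

section
/- Suppose the continuous objective q̂ satisfies the level-set condition H_i(q̂) = Y_i ∩ Suc_N(X_0) for all i ∈ {1,...,m}, where H_i(q̂) is the set of terminal states of feasible trajectories with cost at most α_i. Then any minimizer of q̂ over the dynamically feasible set is a blameless control sequence. -/
/-- Dynamically feasible state/control sequence pairs. -/
def Feas {n ℓ : ℕ} (N : ℕ) (f : (Fin n → ℝ) → (Fin ℓ → ℝ) → (Fin n → ℝ))
    (X0 : Set (Fin n → ℝ)) (U : Set (Fin ℓ → ℝ))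
    (x : Fin (N + 1) → Fin n → ℝ) (u : Fin N → Fin ℓ → ℝ) : Prop :=
  x 0 ∈ X0 ∧ (∀ k : Fin N, u k ∈ U) ∧ ∀ k : Fin N, x k.succ = f (x k.castSucc) (u k)

/-- The `N`-step successor (reachable terminal) set. -/
def Suc {n ℓ : ℕ} (N : ℕ) (f : (Fin n → ℝ) → (Fin ℓ → ℝ) → (Fin n → ℝ))
    (X0 : Set (Fin n → ℝ)) (U : Set (Fin ℓ → ℝ)) : Set (Fin n → ℝ) :=
  { z | ∃ x u, Feas N f X0 U x u ∧ x (Fin.last N) = z }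

/-- Set of terminal states of feasible trajectories whose `qhat`-cost is at most `α`. -/
def SubLevelTerm {n ℓ : ℕ} (N : ℕ) (f : (Fin n → ℝ) → (Fin ℓ → ℝ) → (Fin n → ℝ))
    (X0 : Set (Fin n → ℝ)) (U : Set (Fin ℓ → ℝ))
    (qhat : (Fin (N + 1) → Fin n → ℝ) → (Fin N → Fin ℓ → ℝ) → ℝ) (α : ℝ) :
    Set (Fin n → ℝ) :=
  { z | ∃ x u, Feas N f X0 U x u ∧ qhat x u ≤ α ∧ x (Fin.last N) = z }

/-- Theorem 1 (forward direction): if a continuous objective `qhat` satisfies the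
level-set condition `H_i(qhat) = Y i ∩ Suc_N(X0)` for all `i ∈ {1,…,m}`, then any
minimizer of `qhat` over the dynamically feasible set is a blameless control sequence
(its terminal state lies in `Y i⋆` for the minimal feasible index `i⋆`). -/
theorem level_set_condition_implies_blameless
    {n ℓ : ℕ} (N m : ℕ) (f : (Fin n → ℝ) → (Fin ℓ → ℝ) → (Fin n → ℝ))
    (X0 : Set (Fin n → ℝ)) (U : Set (Fin ℓ → ℝ)) (hU : IsCompact U)
    (qhat : (Fin (N + 1) → Fin n → ℝ) → (Fin N → Fin ℓ → ℝ) → ℝ)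
    (hq : Continuous fun p : (Fin (N + 1) → Fin n → ℝ) × (Fin N → Fin ℓ → ℝ) =>
      qhat p.1 p.2)
    (Y : ℕ → Set (Fin n → ℝ))
    (hnest : ∀ i j, i ≤ j → Y i ⊆ Y j)
    (α : ℕ → ℝ) (hα : ∀ i j, i ≤ j → α i ≤ α j)
    (hlevel : ∀ i, 1 ≤ i → i ≤ m →
      SubLevelTerm N f X0 U qhat (α i) = Y i ∩ Suc N f X0 U)
    (istar : ℕ) (histar : 1 ≤ istar) (histarm : istar ≤ m)
    (hfeas_star : (Y istar ∩ Suc N f X0 U).Nonempty)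
    (hmin_star : ∀ i, i < istar → Y i ∩ Suc N f X0 U = ∅)
    (xs : Fin (N + 1) → Fin n → ℝ) (us : Fin N → Fin ℓ → ℝ)
    (hfeas : Feas N f X0 U xs us)
    (hopt : ∀ x u, Feas N f X0 U x u → qhat xs us ≤ qhat x u) :
    xs (Fin.last N) ∈ Y istar := by
  obtain ⟨z, hz⟩ := hfeas_star
  rw [← hlevel istar histar histarm] at hz
  obtain ⟨x, u, hxu, hcost, -⟩ := hz
  have h1 : qhat xs us ≤ α istar := le_trans (hopt x u hxu) hcost
  have h2 : xs (Fin.last N) ∈ SubLevelTerm N f X0 U qhat (α istar) :=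
    ⟨xs, us, hfeas, h1, rfl⟩
  rw [hlevel istar histar histarm] at h2
  exact h2.1
end

section
/- Let U be compact, f continuous, X_0 compact, and q continuous. If for every i the set of feasible pairs with terminal state in Y_i is closed (Y_i closed), then the two-stage procedure — (1) compute i* = min{ i : Y_i ∩ Suc_N(X_0) ≠ ∅ }, (2) minimize q subject to feasibility and x_N ∈ Y_{i*} — returns, whenever some Y_i is reachable, a control sequence that is blameless and achieves the minimum of q among all blameless feasible sequences; moreover it solves exactly two optimization problems regardless of m. -/
/-- Trajectory generated by initial state `x0` and (extended) control `u`. -/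
def traj {α β : Type*} (f : α → β → α) (x0 : α) (u : ℕ → β) : ℕ → α
  | 0 => x0
  | k + 1 => f (traj f x0 u k) (u k)

/-- Extend a finite control sequence by zero. -/
def ext {ℓ N : ℕ} (u : Fin N → Fin ℓ → ℝ) : ℕ → Fin ℓ → ℝ :=
  fun j => if h : j < N then u ⟨j, h⟩ else 0

lemma ext_lt {ℓ N : ℕ} (u : Fin N → Fin ℓ → ℝ) {j : ℕ} (h : j < N) :
    ext u j = u ⟨j, h⟩ := by simp [ext, h]

lemma continuous_traj {n ℓ N : ℕ} (f : (Fin n → ℝ) → (Fin ℓ → ℝ) → (Fin n → ℝ))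
    (hf : Continuous fun p : (Fin n → ℝ) × (Fin ℓ → ℝ) => f p.1 p.2) (k : ℕ) :
    Continuous fun p : (Fin n → ℝ) × (Fin N → Fin ℓ → ℝ) =>
      traj f p.1 (ext p.2) k := by
  induction k with
  | zero => exact continuous_fst
  | succ k ih =>
      have hc : Continuous fun p : (Fin n → ℝ) × (Fin N → Fin ℓ → ℝ) =>
          ext p.2 k := by
        by_cases h : k < N
        · simp only [ext, dif_pos h]
          exact (continuous_apply (⟨k, h⟩ : Fin N)).comp continuous_snd
        · simp only [ext, dif_neg h]
          exact continuous_const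
      exact hf.comp (ih.prodMk hc)

lemma feas_eq_traj {n ℓ N : ℕ} {f : (Fin n → ℝ) → (Fin ℓ → ℝ) → (Fin n → ℝ)}
    {X0 : Set (Fin n → ℝ)} {U : Set (Fin ℓ → ℝ)}
    {x : Fin (N + 1) → Fin n → ℝ} {u : Fin N → Fin ℓ → ℝ}
    (hx : Feas N f X0 U x u) (j : Fin (N + 1)) :
    x j = traj f (x 0) (ext u) j.1 := by
  obtain ⟨-, -, hdyn⟩ := hx
  obtain ⟨j, hj⟩ := j
  induction j with
  | zero => rfl
  | succ j ih =>
      have hjN : j < N := Nat.lt_of_succ_lt_succ hj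
      have h1 : (⟨j + 1, hj⟩ : Fin (N + 1)) = (⟨j, hjN⟩ : Fin N).succ := rfl
      have h2 : (⟨j, Nat.lt_of_succ_lt hj⟩ : Fin (N + 1)) =
          (⟨j, hjN⟩ : Fin N).castSucc := rfl
      rw [h1, hdyn ⟨j, hjN⟩, ← h2, ih (Nat.lt_of_succ_lt hj)]
      simp [traj, ext_lt u hjN, Fin.castSucc]

lemma feas_of_traj {n ℓ N : ℕ} {f : (Fin n → ℝ) → (Fin ℓ → ℝ) → (Fin n → ℝ)}
    {X0 : Set (Fin n → ℝ)} {U : Set (Fin ℓ → ℝ)}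
    {x0 : Fin n → ℝ} {u : Fin N → Fin ℓ → ℝ}
    (h0 : x0 ∈ X0) (hu : ∀ k, u k ∈ U) :
    Feas N f X0 U (fun j => traj f x0 (ext u) j.1) u := by
  refine ⟨h0, hu, fun k => ?_⟩
  show traj f x0 (ext u) (k.1 + 1) = _
  simp [traj, ext_lt u k.2, Fin.castSucc]

/-- Correctness of the two-stage procedure (Algorithm 2), with existence of minimizers:
under continuity of `f` and `q`, compactness of `U` and `X0`, closedness of the nested
sets `Y i`, and reachability of some `Y i`, there exists a minimal feasible index `i⋆`
and a feasible pair `(x⋆, u⋆)` with terminal state in `Y i⋆` (hence blameless) whose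
cost `q` is minimal among all blameless feasible pairs. -/
theorem two_stage_blameless_control_correct
    {n ℓ : ℕ} (N m : ℕ) (f : (Fin n → ℝ) → (Fin ℓ → ℝ) → (Fin n → ℝ))
    (hf : Continuous fun p : (Fin n → ℝ) × (Fin ℓ → ℝ) => f p.1 p.2)
    (X0 : Set (Fin n → ℝ)) (hX0 : IsCompact X0)
    (U : Set (Fin ℓ → ℝ)) (hU : IsCompact U)
    (Y : ℕ → Set (Fin n → ℝ))
    (hclosed : ∀ i, 1 ≤ i → i ≤ m → IsClosed (Y i))
    (hnest : ∀ i j, i ≤ j → Y i ⊆ Y j)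
    (q : (Fin (N + 1) → Fin n → ℝ) → (Fin N → Fin ℓ → ℝ) → ℝ)
    (hq : Continuous fun p : (Fin (N + 1) → Fin n → ℝ) × (Fin N → Fin ℓ → ℝ) =>
      q p.1 p.2)
    (hreach : ∃ i, 1 ≤ i ∧ i ≤ m ∧ (Y i ∩ Suc N f X0 U).Nonempty) :
    ∃ istar, 1 ≤ istar ∧ istar ≤ m ∧ (Y istar ∩ Suc N f X0 U).Nonempty ∧
      (∀ i, 1 ≤ i → i ≤ m → (Y i ∩ Suc N f X0 U).Nonempty → istar ≤ i) ∧
      ∃ x u, Feas N f X0 U x u ∧ x (Fin.last N) ∈ Y istar ∧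
        ∀ x' u', Feas N f X0 U x' u' → x' (Fin.last N) ∈ Y istar →
          q x u ≤ q x' u' := by
  classical
  -- Stage 1: minimal feasible index via Nat.find
  set P : ℕ → Prop := fun i => 1 ≤ i ∧ i ≤ m ∧ (Y i ∩ Suc N f X0 U).Nonempty with hP
  have hPex : ∃ i, P i := hreach
  set istar := Nat.find hPex with histar
  obtain ⟨h1, h2, h3⟩ := Nat.find_spec hPex
  refine ⟨istar, h1, h2, h3, fun i hi1 hi2 hi3 => Nat.find_min' hPex ⟨hi1, hi2, hi3⟩, ?_⟩
  -- Stage 2: minimize q over compact feasible set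
  set Φ : (Fin n → ℝ) × (Fin N → Fin ℓ → ℝ) → (Fin (N + 1) → Fin n → ℝ) :=
    fun p j => traj f p.1 (ext p.2) j.1 with hΦ
  have hΦc : Continuous Φ :=
    continuous_pi fun j => continuous_traj f hf j.1
  set g : (Fin n → ℝ) × (Fin N → Fin ℓ → ℝ) → ℝ := fun p => q (Φ p) p.2 with hg
  have hgc : Continuous g := hq.comp (hΦc.prodMk continuous_snd)
  set K : Set ((Fin n → ℝ) × (Fin N → Fin ℓ → ℝ)) :=
    (X0 ×ˢ Set.pi Set.univ (fun _ => U)) ∩ {p | Φ p (Fin.last N) ∈ Y istar} with hK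
  have hKc : IsCompact K := by
    apply (hX0.prod (isCompact_univ_pi fun _ => hU)).inter_right
    exact (hclosed istar h1 h2).preimage ((continuous_apply (Fin.last N)).comp hΦc)
  have hKne : K.Nonempty := by
    obtain ⟨z, hzY, x, u, hfe, hlast⟩ := h3
    refine ⟨(x 0, u), ⟨hfe.1, fun k _ => hfe.2.1 k⟩, ?_⟩
    have := feas_eq_traj hfe (Fin.last N)
    show Φ (x 0, u) (Fin.last N) ∈ Y istar
    rw [hΦ]
    simp only
    rw [← this, hlast]
    exact hzY
  obtain ⟨p, hpK, hpmin⟩ := hKc.exists_isMinOn hKne hgc.continuousOn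
  obtain ⟨⟨hp0, hpu⟩, hpY⟩ := hpK
  refine ⟨Φ p, p.2, feas_of_traj hp0 (fun k => hpu k (Set.mem_univ k)), hpY, ?_⟩
  intro x' u' hfe' hY'
  have hx' : x' = Φ (x' 0, u') := funext fun j => feas_eq_traj hfe' j
  have hmem : (x' 0, u') ∈ K := by
    refine ⟨⟨hfe'.1, fun k _ => hfe'.2.1 k⟩, ?_⟩
    show Φ (x' 0, u') (Fin.last N) ∈ Y istar
    rw [← hx']; exact hY'
  have := hpmin hmem
  calc q (Φ p) p.2 = g p := rfl
    _ ≤ g (x' 0, u') := this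
    _ = q x' u' := by rw [hg]; simp only; rw [← hx']
end
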